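/- arXiv:0802.2730 — 2 statements merged into one kernel-verified Lean document; each statement's English description precedes it below -/
import Mathlib

section
/- Let A=(C,m) be a 3-dimensional toric idealistic cluster, let Q_i be a node of weight m := m_i ≥ 2 whose only child is Q_i(1), of weight m−1, and suppose that the nodes of C proximate to Q_i are exactly the following: Q_i(1); Q_i(1,2), of weight 1; and Q_i(1,2,3^s) for 1 ≤ s ≤ m−2, each of weight 1 (so the label 3 occurs m−2 times in this chain). If the set of labels under Q_i equals {3}, or equals {2,3}, then χ_i = 0. -/
open Finset

/-!
Common framework: 3-dimensional toric constellations and toric idealistic clusters.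
The edge labels `1, 2, 3` of the paper are encoded as `0, 1, 2 : Fin 3`.
-/

/-- A 3-dimensional toric constellation: a finite rooted tree on nodes `0, …, r−1`
(node `0` the root, every child having larger index than its parent), each node having
at most three children, the edges from a node to its children carrying pairwise
distinct labels in `Fin 3`.  `label j` is the label of the edge from `parent j` to `j`
(irrelevant for the root). -/
structure ToricConstellation (r : ℕ) where
  parent : Fin r → Fin r
  label : Fin r → Fin 3
  parent_lt : ∀ i : Fin r, 0 < (i : ℕ) → (parent i : ℕ) < (i : ℕ)
  parent_root : ∀ i : Fin r, (i : ℕ) = 0 → parent i = i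
  label_distinct : ∀ i j : Fin r, 0 < (i : ℕ) → 0 < (j : ℕ) → i ≠ j →
    parent i = parent j → label i ≠ label j

namespace ToricConstellation

variable {r : ℕ}

/-- The ordered triple of vectors of `ℤ³` attached to a node: the root carries the
standard basis, and the child along the edge labelled `a` of a node with cone
`(u₁,u₂,u₃)` carries the triple obtained by replacing `u_a` with `u₁+u₂+u₃`. -/
def cone (C : ToricConstellation r) (i : Fin r) : Fin 3 → (Fin 3 → ℤ) :=
  if h : 0 < (i : ℕ) then
    Function.update (cone C (C.parent i)) (C.label i) (∑ a, cone C (C.parent i) a)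
  else fun a => Pi.single a 1
termination_by (i : ℕ)
decreasing_by all_goals exact C.parent_lt i h

/-- `v(Q) = u₁ + u₂ + u₃`, the sum of the cone vectors of a node. -/
def v (C : ToricConstellation r) (i : Fin r) : Fin 3 → ℤ := ∑ a, cone C i a

/-- `Prox C j i` means `j → i`, i.e. `Q_j` is proximate to `Q_i`:
`j ≠ i` and `v(Q_i)` is an entry of `cone(Q_j)`. -/
def Prox (C : ToricConstellation r) (j i : Fin r) : Prop :=
  j ≠ i ∧ ∃ a : Fin 3, cone C j a = v C i

instance (C : ToricConstellation r) (j i : Fin r) : Decidable (C.Prox j i) := by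
  unfold Prox; infer_instance

/-- `inChain C i a b j = true` iff `j = Q_i(a, b^t)` for some `t ≥ 0`, i.e. `j` is
reached from `i` by one edge labelled `a` followed by `t` edges labelled `b`. -/
def inChain (C : ToricConstellation r) (i : Fin r) (a b : Fin 3) (j : Fin r) : Bool :=
  if h : 0 < (j : ℕ) then
    (decide (C.parent j = i) && decide (C.label j = a)) ||
      (decide (C.label j = b) && inChain C i a b (C.parent j))
  else false
termination_by (j : ℕ)
decreasing_by exact C.parent_lt j h

/-- `LinProx C j i` means `j ↠ i`, i.e. `Q_j` is linearly proximate to `Q_i`. -/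
def LinProx (C : ToricConstellation r) (j i : Fin r) : Prop :=
  ∃ a b : Fin 3, a ≠ b ∧ inChain C i a b j = true

instance (C : ToricConstellation r) (j i : Fin r) : Decidable (C.LinProx j i) := by
  unfold LinProx; infer_instance

/-- `j` is a child of `i`. -/
def IsChild (C : ToricConstellation r) (j i : Fin r) : Prop :=
  0 < (j : ℕ) ∧ C.parent j = i

instance (C : ToricConstellation r) (j i : Fin r) : Decidable (C.IsChild j i) := by
  unfold IsChild; infer_instance

/-- The set `S_i` of labels of the edges on the path from the root to `Q_i`. -/
def labelsUnder (C : ToricConstellation r) (i : Fin r) : Finset (Fin 3) :=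
  if h : 0 < (i : ℕ) then insert (C.label i) (labelsUnder C (C.parent i)) else ∅
termination_by (i : ℕ)
decreasing_by exact C.parent_lt i h

/-- `i` is a weak ancestor of `j` (`i = j` or `i` a strict ancestor of `j`). -/
def anc (C : ToricConstellation r) (i j : Fin r) : Bool :=
  decide (i = j) || (if h : 0 < (j : ℕ) then anc C i (C.parent j) else false)
termination_by (j : ℕ)
decreasing_by exact C.parent_lt j h

/-- The set of nodes weakly above `i` (`i` together with its descendants). -/
def weakAbove (C : ToricConstellation r) (i : Fin r) : Finset (Fin r) :=
  univ.filter (fun j => anc C i j = true)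

end ToricConstellation

/-- A 3-dimensional toric cluster: a toric constellation together with a positive
integer weight for each node. -/
structure ToricCluster (r : ℕ) extends ToricConstellation r where
  m : Fin r → ℤ
  m_pos : ∀ j, 0 < m j

namespace ToricCluster

open ToricConstellation

variable {r : ℕ}

/-- `M_{Q_i}(a,b) := Σ_{t ≥ 0, Q_i(a,b^t) ∈ C} m_{Q_i(a,b^t)}`. -/
def M (A : ToricCluster r) (i : Fin r) (a b : Fin 3) : ℤ :=
  ∑ j ∈ univ.filter (fun j => inChain A.toToricConstellation i a b j = true), A.m j

/-- The cluster is idealistic: the linear proximity inequalities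
`M_{Q_i}(a,b) + M_{Q_i}(b,a) ≤ m_{Q_i}` hold. -/
def Idealistic (A : ToricCluster r) : Prop :=
  ∀ i : Fin r, ∀ a b : Fin 3, a ≠ b → A.M i a b + A.M i b a ≤ A.m i

/-- The set of nodes `j` proximate to `i` (`j → i`). -/
def proxSet (A : ToricCluster r) (i : Fin r) : Finset (Fin r) :=
  univ.filter (fun j => Prox A.toToricConstellation j i)

/-- `B_i`: the set of nodes to which `i` is proximate. -/
def Bset (A : ToricCluster r) (i : Fin r) : Finset (Fin r) :=
  univ.filter (fun j => Prox A.toToricConstellation i j)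

/-- `A_i`: the children `k` of `i` for which there is no `l` with `i → l` and `k → l`. -/
def Aset (A : ToricCluster r) (i : Fin r) : Finset (Fin r) :=
  univ.filter (fun k => IsChild A.toToricConstellation k i ∧
    ¬ ∃ l, Prox A.toToricConstellation i l ∧ Prox A.toToricConstellation k l)

/-- The Euler characteristic `χ_i = χ(E_i°)`. -/
def chi (A : ToricCluster r) (i : Fin r) : ℤ :=
  3 + A.m i * (A.m i - 3)
    - ∑ j ∈ A.proxSet i, A.m j * (A.m j - 1)
    + ∑ j ∈ A.proxSet i,
        (A.m j - ∑ k ∈ (A.proxSet i).filter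
          (fun k => LinProx A.toToricConstellation k j), A.m k)
    + ∑ j ∈ A.Bset i,
        (A.m i - ∑ k ∈ (A.proxSet j).filter
          (fun k => LinProx A.toToricConstellation k i), A.m k)
    - ((A.Aset i).card : ℤ) - 2 * ((A.Bset i).card : ℤ)
    + (((A.Bset i).card.choose 2 : ℕ) : ℤ)

/-- `D_i = m_i² − Σ_{j→i} m_j²`. -/
def D (A : ToricCluster r) (i : Fin r) : ℤ :=
  A.m i ^ 2 - ∑ j ∈ A.proxSet i, A.m j ^ 2

/-- `r_{ab} = m_i − M_{Q_i}(a,b) − M_{Q_i}(b,a)`. -/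
def rab (A : ToricCluster r) (i : Fin r) (a b : Fin 3) : ℤ :=
  A.m i - A.M i a b - A.M i b a

/-- `R_i = r̂_{12} + r̂_{13} + r̂_{23}`, where `r̂_{ab} = r_{ab}` if the remaining third
label does not appear under `Q_i`, and `r̂_{ab} = 0` otherwise.  (Labels `1,2,3` are
encoded as `0,1,2 : Fin 3`.) -/
def R (A : ToricCluster r) (i : Fin r) : ℤ :=
  (if (2 : Fin 3) ∉ labelsUnder A.toToricConstellation i then A.rab i 0 1 else 0)
  + (if (1 : Fin 3) ∉ labelsUnder A.toToricConstellation i then A.rab i 0 2 else 0)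
  + (if (0 : Fin 3) ∉ labelsUnder A.toToricConstellation i then A.rab i 1 2 else 0)

/-- `T_i = 3 − #A_i − 2·#B_i + (#B_i choose 2)`. -/
def T (A : ToricCluster r) (i : Fin r) : ℤ :=
  3 - ((A.Aset i).card : ℤ) - 2 * ((A.Bset i).card : ℤ)
    + (((A.Bset i).card.choose 2 : ℕ) : ℤ)

/-- The nodes to which `i` is proximate, of smaller index: the sums in the recursive
definitions of the numerical data range over the nodes to which `i` is proximate,
which are ancestors of `i` and hence have smaller index (making the recursion
well-founded). -/
def anteSet (A : ToricCluster r) (i : Fin r) : Finset (Fin r) :=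
  univ.filter (fun j => (j : ℕ) < (i : ℕ) ∧ Prox A.toToricConstellation i j)

/-- The numerical datum `N_i := m_i + Σ_{j : i→j} N_j`. -/
def N (A : ToricCluster r) (i : Fin r) : ℤ :=
  A.m i + ∑ j ∈ (A.anteSet i).attach, N A j.1
termination_by (i : ℕ)
decreasing_by
  have hj := j.2
  simp only [anteSet, Finset.mem_filter] at hj
  exact hj.2.1

/-- The numerical datum `ν_i := 3 + Σ_{j : i→j} (ν_j − 1)`. -/
def nu (A : ToricCluster r) (i : Fin r) : ℤ :=
  3 + ∑ j ∈ (A.anteSet i).attach, (nu A j.1 - 1)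
termination_by (i : ℕ)
decreasing_by
  have hj := j.2
  simp only [anteSet, Finset.mem_filter] at hj
  exact hj.2.1

end ToricCluster


open ToricConstellation ToricCluster

/-!
Every node proximate to `Q_i` has a known weight, so `χ_i` comes down to deciding which of
these nodes are linearly proximate to which. Among them, the nodes linearly proximate to
`Q_i(1)` are the `Q_i(1,2,3^s)`, the only one linearly proximate to `Q_i(1,2,3^s)` is the next
node of the chain, and, since linear proximity implies proximity, only `Q_i(1)` and `Q_i(1,2)`
are linearly proximate to `Q_i`. The labels under `Q_i` determine the nodes to which `Q_i` is
proximate: its parent when they are `{3}`, two ancestors when they are `{2,3}`. Identifying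
these nodes from the entries of `cone(Q_i)` uses that `v` is injective: `v(Q)` has positive
coordinates in the cone of every ancestor `Z` of `Q`, and when `Q ≠ Z` the smallest one sits
at the label of the first edge from `Z` towards `Q`.
-/

section UpdateSum

variable {ι R M : Type*} [Fintype ι] [DecidableEq ι] [Ring R] [AddCommGroup M] [Module R M]

lemma sum_smul_update_sum (u : ι → M) (l : ι) (β : ι → R) :
    ∑ b, β b • Function.update u l (∑ a, u a) b
      = ∑ b, (β b + if b = l then 0 else β l) • u b := by
  have hu : ∑ a, u a = u l + ∑ a ∈ univ.erase l, u a := (add_sum_erase _ _ (mem_univ l)).symm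
  simp only [Function.update_apply, smul_ite, add_smul, ite_smul, zero_smul, sum_add_distrib,
    sum_ite, filter_eq', filter_ne', mem_univ, if_true, sum_singleton, sum_const_zero,
    hu, smul_add, smul_sum]
  rw [← add_sum_erase _ (fun b => β b • u b) (mem_univ l)]
  abel

lemma LinearIndependent.update_sum {u : ι → M} (hu : LinearIndependent R u) (l : ι) :
    LinearIndependent R (Function.update u l (∑ a, u a)) := by
  rw [Fintype.linearIndependent_iff] at hu ⊢
  intro β hβ
  rw [sum_smul_update_sum] at hβ
  have hl : β l = 0 := by simpa using hu _ hβ l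
  intro b
  simpa [hl] using hu _ hβ b

end UpdateSum

namespace ToricConstellation

variable {r : ℕ} (C : ToricConstellation r)

lemma cone_of_val_eq_zero {i : Fin r} (h : (i : ℕ) = 0) : C.cone i = fun a => Pi.single a 1 := by
  rw [cone]; simp [h]

lemma cone_of_pos {i : Fin r} (h : 0 < (i : ℕ)) :
    C.cone i = Function.update (C.cone (C.parent i)) (C.label i) (C.v (C.parent i)) := by
  rw [cone]; simp [h, v]

lemma labelsUnder_of_val_eq_zero {i : Fin r} (h : (i : ℕ) = 0) : C.labelsUnder i = ∅ := by
  rw [labelsUnder]; simp [h]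

lemma labelsUnder_of_pos {i : Fin r} (h : 0 < (i : ℕ)) :
    C.labelsUnder i = insert (C.label i) (C.labelsUnder (C.parent i)) := by
  rw [labelsUnder]; simp [h]

lemma pos_of_labelsUnder_nonempty {i : Fin r} (h : (C.labelsUnder i).Nonempty) : 0 < (i : ℕ) := by
  by_contra hi
  rw [C.labelsUnder_of_val_eq_zero (by omega)] at h
  exact not_nonempty_empty h

lemma label_mem_labelsUnder {i : Fin r} (h : 0 < (i : ℕ)) : C.label i ∈ C.labelsUnder i := by
  rw [C.labelsUnder_of_pos h]
  exact mem_insert_self _ _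

lemma parent_lt_self {i : Fin r} (h : 0 < (i : ℕ)) : C.parent i < i := C.parent_lt i h

lemma lt_of_isChild {k i : Fin r} (h : C.IsChild k i) : i < k :=
  h.2 ▸ C.parent_lt_self h.1

lemma linearIndependent_cone (i : Fin r) : LinearIndependent ℤ (C.cone i) := by
  by_cases h : 0 < (i : ℕ)
  · rw [cone_of_pos C h]
    exact (linearIndependent_cone (C.parent i)).update_sum (C.label i)
  · rw [cone_of_val_eq_zero C (by omega)]
    convert (Pi.basisFun ℤ (Fin 3)).linearIndependent using 1
    · exact funext fun a => (Pi.basisFun_apply ℤ (Fin 3) a).symm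
    · exact Subsingleton.elim _ _
termination_by (i : ℕ)
decreasing_by exact C.parent_lt i h

lemma sum_smul_cone_of_pos {W : Fin r} (hW : 0 < (W : ℕ)) (β : Fin 3 → ℤ) :
    ∑ b, β b • C.cone W b
      = ∑ b, (β b + if b = C.label W then 0 else β (C.label W)) • C.cone (C.parent W) b := by
  rw [cone_of_pos C hW, v, sum_smul_update_sum]

lemma v_eq_sum_smul_cone (i : Fin r) : C.v i = ∑ b, (1 : ℤ) • C.cone i b := by
  simp [v]

lemma cone_of_not_mem_labelsUnder {i : Fin r} {c : Fin 3} (h : c ∉ C.labelsUnder i) :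
    C.cone i c = Pi.single c 1 := by
  by_cases hi : 0 < (i : ℕ)
  · rw [labelsUnder_of_pos C hi, mem_insert, not_or] at h
    rw [cone_of_pos C hi, Function.update_of_ne h.1]
    exact cone_of_not_mem_labelsUnder h.2
  · rw [cone_of_val_eq_zero C (by omega)]
termination_by (i : ℕ)
decreasing_by exact C.parent_lt i hi

lemma exists_cone_eq_v_of_mem_labelsUnder {i : Fin r} {c : Fin 3} (h : c ∈ C.labelsUnder i) :
    ∃ a, a < i ∧ C.cone i c = C.v a := by
  by_cases hi : 0 < (i : ℕ)
  · rw [labelsUnder_of_pos C hi, mem_insert] at h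
    rw [cone_of_pos C hi]
    rcases eq_or_ne c (C.label i) with rfl | hc
    · exact ⟨C.parent i, C.parent_lt i hi, Function.update_self ..⟩
    · obtain ⟨a, ha, he⟩ := exists_cone_eq_v_of_mem_labelsUnder (h.resolve_left hc)
      exact ⟨a, ha.trans (C.parent_lt i hi), by rw [Function.update_of_ne hc, he]⟩
  · rw [labelsUnder_of_val_eq_zero C (by omega)] at h
    exact absurd h (notMem_empty c)
termination_by (i : ℕ)
decreasing_by exact C.parent_lt i hi

lemma anc_iff {x j : Fin r} :
    C.anc x j = true ↔ x = j ∨ (0 < (j : ℕ) ∧ C.anc x (C.parent j) = true) := by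
  rw [anc]
  by_cases hj : 0 < (j : ℕ) <;> simp [hj]

lemma anc_self (x : Fin r) : C.anc x x = true := (C.anc_iff).2 (Or.inl rfl)

lemma le_of_anc {x j : Fin r} (h : C.anc x j = true) : x ≤ j := by
  rcases (C.anc_iff).1 h with rfl | ⟨hj, hp⟩
  · exact le_rfl
  · exact (le_of_anc hp).trans (C.parent_lt j hj).le
termination_by (j : ℕ)
decreasing_by exact C.parent_lt j hj

lemma anc_of_val_eq_zero {z : Fin r} (hz : (z : ℕ) = 0) (j : Fin r) : C.anc z j = true := by
  by_cases hj : 0 < (j : ℕ)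
  · exact (C.anc_iff).2 (Or.inr ⟨hj, anc_of_val_eq_zero hz (C.parent j)⟩)
  · rw [show z = j from Fin.ext (by omega)]
    exact C.anc_self j
termination_by (j : ℕ)
decreasing_by exact C.parent_lt j hj

lemma exists_isChild_anc_of_anc {z j : Fin r} (h : C.anc z j = true) (hne : j ≠ z) :
    ∃ w, C.IsChild w z ∧ C.anc w j = true := by
  rcases (C.anc_iff).1 h with rfl | ⟨hj, hp⟩
  · exact absurd rfl hne
  · by_cases hpz : C.parent j = z
    · exact ⟨j, ⟨hj, hpz⟩, C.anc_self j⟩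
    · obtain ⟨w, hw, hwp⟩ := exists_isChild_anc_of_anc hp hpz
      exact ⟨w, hw, (C.anc_iff).2 (Or.inr ⟨hj, hwp⟩)⟩
termination_by (j : ℕ)
decreasing_by exact C.parent_lt j hj

lemma exists_pos_coeffs_of_anc {z d : Fin r} (h : C.anc z d = true) :
    ∃ β : Fin 3 → ℤ, (∀ b, 0 < β b) ∧ C.v d = ∑ b, β b • C.cone z b := by
  by_cases hdz : d = z
  · exact ⟨1, fun _ => one_pos, hdz ▸ C.v_eq_sum_smul_cone d⟩
  · obtain ⟨w, ⟨hw, rfl⟩, hwd⟩ := C.exists_isChild_anc_of_anc h hdz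
    have hwz : C.parent w < w := C.parent_lt w hw
    obtain ⟨β, hβ, hv⟩ := exists_pos_coeffs_of_anc hwd
    refine ⟨_, fun b => ?_, hv.trans (C.sum_smul_cone_of_pos hw β)⟩
    split_ifs
    · simpa using hβ b
    · linarith [hβ b, hβ (C.label w)]
termination_by (d : ℕ) - (z : ℕ)
decreasing_by
  have := C.le_of_anc hwd
  omega

lemma exists_coeffs_lt_of_anc {w d : Fin r} (hw : 0 < (w : ℕ)) (h : C.anc w d = true) :
    ∃ α : Fin 3 → ℤ, C.v d = ∑ b, α b • C.cone (C.parent w) b ∧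
      ∀ b ≠ C.label w, α (C.label w) < α b := by
  obtain ⟨β, hβ, hv⟩ := C.exists_pos_coeffs_of_anc h
  refine ⟨_, hv.trans (C.sum_smul_cone_of_pos hw β), fun b hb => ?_⟩
  simp only [hb, if_true, if_false, add_zero]
  linarith [hβ b]

lemma v_ne_of_anc {z d : Fin r} (h : C.anc z d = true) (hne : d ≠ z) : C.v d ≠ C.v z := by
  intro hv
  obtain ⟨w, ⟨hw, rfl⟩, hwd⟩ := C.exists_isChild_anc_of_anc h hne
  obtain ⟨α, hα, hlt⟩ := C.exists_coeffs_lt_of_anc hw hwd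
  have hα1 (b : Fin 3) : α b = 1 := (C.linearIndependent_cone _).eq_coords_of_eq
    (hα.symm.trans (hv.trans (C.v_eq_sum_smul_cone _))) b
  obtain ⟨b, hb⟩ := exists_ne (C.label w)
  simpa [hα1] using hlt b hb

lemma v_injOn_anc (z : Fin r) {j j' : Fin r} (hj : C.anc z j = true) (hj' : C.anc z j' = true)
    (hv : C.v j = C.v j') : j = j' := by
  by_cases hjz : j = z
  · subst hjz
    by_contra hne
    exact C.v_ne_of_anc hj' (Ne.symm hne) hv.symm
  by_cases hj'z : j' = z
  · subst hj'z
    exact absurd hv (C.v_ne_of_anc hj hjz)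
  obtain ⟨w, ⟨hw, hwz⟩, hwj⟩ := C.exists_isChild_anc_of_anc hj hjz
  obtain ⟨w', ⟨hw', hw'z⟩, hw'j'⟩ := C.exists_isChild_anc_of_anc hj' hj'z
  by_cases hww' : w = w'
  · subst hww'
    have : z < w := hwz ▸ C.parent_lt w hw
    exact v_injOn_anc w hwj hw'j' hv
  · have hlab := C.label_distinct w w' hw hw' hww' (hwz.trans hw'z.symm)
    obtain ⟨α, hα, hlt⟩ := C.exists_coeffs_lt_of_anc hw hwj
    obtain ⟨α', hα', hlt'⟩ := C.exists_coeffs_lt_of_anc hw' hw'j'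
    rw [hw'z] at hα'
    rw [hwz] at hα
    have hαα' : α = α' :=
      funext ((C.linearIndependent_cone z).eq_coords_of_eq (hα.symm.trans (hv.trans hα')))
    subst hαα'
    exact absurd ((hlt _ (Ne.symm hlab)).trans (hlt' _ hlab)) (lt_irrefl _)
termination_by r - (z : ℕ)
decreasing_by omega

lemma v_injective : Function.Injective C.v := fun j j' hv =>
  have h0 : ((⟨0, j.pos⟩ : Fin r) : ℕ) = 0 := rfl
  C.v_injOn_anc _ (C.anc_of_val_eq_zero h0 j) (C.anc_of_val_eq_zero h0 j') hv

lemma v_pos (j : Fin r) (x : Fin 3) : 0 < C.v j x := by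
  obtain ⟨β, hβ, hv⟩ :=
    C.exists_pos_coeffs_of_anc (C.anc_of_val_eq_zero (z := ⟨0, j.pos⟩) rfl j)
  rw [cone_of_val_eq_zero C rfl] at hv
  simpa [hv, Pi.single_apply] using hβ x

lemma single_ne_v (c : Fin 3) (j : Fin r) : Pi.single c 1 ≠ C.v j := by
  obtain ⟨x, hx⟩ := exists_ne c
  intro h
  simpa [← h, hx] using C.v_pos j x

lemma inChain_iff {x k : Fin r} {a b : Fin 3} :
    C.inChain x a b k = true ↔ 0 < (k : ℕ) ∧ ((C.parent k = x ∧ C.label k = a) ∨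
      (C.label k = b ∧ C.inChain x a b (C.parent k) = true)) := by
  rw [inChain]
  by_cases hk : 0 < (k : ℕ) <;> simp [hk]

lemma inChain_of_isChild {x k : Fin r} {a b : Fin 3} (hk : C.IsChild k x) (hl : C.label k = a) :
    C.inChain x a b k = true :=
  (C.inChain_iff).2 ⟨hk.1, Or.inl ⟨hk.2, hl⟩⟩

lemma inChain_of_parent {x k : Fin r} {a b : Fin 3} (hk : 0 < (k : ℕ)) (hl : C.label k = b)
    (h : C.inChain x a b (C.parent k) = true) : C.inChain x a b k = true :=
  (C.inChain_iff).2 ⟨hk, Or.inr ⟨hl, h⟩⟩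

lemma lt_of_inChain {x k : Fin r} {a b : Fin 3} (h : C.inChain x a b k = true) : x < k := by
  obtain ⟨hk, ⟨hp, -⟩ | ⟨-, hp⟩⟩ := (C.inChain_iff).1 h
  · exact hp ▸ C.parent_lt k hk
  · exact (lt_of_inChain hp).trans (C.parent_lt k hk)
termination_by (k : ℕ)
decreasing_by exact C.parent_lt k hk

lemma label_eq_of_inChain_of_isChild {x k : Fin r} {a b : Fin 3}
    (h : C.inChain x a b k = true) (hk : C.IsChild k x) : C.label k = a := by
  obtain ⟨-, ⟨-, hl⟩ | ⟨-, hp⟩⟩ := (C.inChain_iff).1 h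
  · exact hl
  · have hlt := C.lt_of_inChain hp
    rw [hk.2] at hlt
    exact absurd hlt (lt_irrefl x)

lemma inChain_parent_of_parent_ne {x k : Fin r} {a b : Fin 3}
    (h : C.inChain x a b k = true) (hne : C.parent k ≠ x) :
    C.label k = b ∧ C.inChain x a b (C.parent k) = true := by
  obtain ⟨-, ⟨hp, -⟩ | h'⟩ := (C.inChain_iff).1 h
  · exact absurd hp hne
  · exact h'

lemma cone_eq_v_of_inChain {x k : Fin r} {a b : Fin 3} (hab : a ≠ b)
    (h : C.inChain x a b k = true) : C.cone k a = C.v x := by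
  obtain ⟨hk, ⟨hp, hl⟩ | ⟨hl, hp⟩⟩ := (C.inChain_iff).1 h
  · rw [cone_of_pos C hk, hp, hl, Function.update_self]
  · rw [cone_of_pos C hk, hl, Function.update_of_ne hab]
    exact cone_eq_v_of_inChain hab hp
termination_by (k : ℕ)
decreasing_by exact C.parent_lt k hk

lemma prox_of_linProx {k x : Fin r} (h : C.LinProx k x) : C.Prox k x := by
  obtain ⟨a, b, hab, hk⟩ := h
  exact ⟨(C.lt_of_inChain hk).ne', a, C.cone_eq_v_of_inChain hab hk⟩

lemma prox_parent {i : Fin r} (hi : 0 < (i : ℕ)) : C.Prox i (C.parent i) :=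
  ⟨(C.parent_lt_self hi).ne', C.label i, by rw [cone_of_pos C hi, Function.update_self]⟩

lemma prox_parent_of_isChild {k i : Fin r} (hk : C.IsChild k i) (hi : 0 < (i : ℕ))
    (hl : C.label k ≠ C.label i) : C.Prox k (C.parent i) := by
  refine ⟨((C.parent_lt_self hi).trans (C.lt_of_isChild hk)).ne', C.label i, ?_⟩
  rw [cone_of_pos C hk.1, hk.2, Function.update_of_ne hl.symm, cone_of_pos C hi,
    Function.update_self]

end ToricConstellation

namespace ToricCluster

variable {r : ℕ} (A : ToricCluster r)

lemma mem_Bset_iff {i j : Fin r} :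
    j ∈ A.Bset i ↔ ∃ c ∈ A.labelsUnder i, A.cone i c = A.v j := by
  simp only [Bset, mem_filter, mem_univ, true_and]
  constructor
  · rintro ⟨-, c, hc⟩
    by_cases hcl : c ∈ A.labelsUnder i
    · exact ⟨c, hcl, hc⟩
    · rw [A.cone_of_not_mem_labelsUnder hcl] at hc
      exact absurd hc (A.single_ne_v c j)
  · rintro ⟨c, hcl, hc⟩
    obtain ⟨a, ha, hca⟩ := A.exists_cone_eq_v_of_mem_labelsUnder hcl
    obtain rfl := A.v_injective (hca.symm.trans hc)
    exact ⟨ha.ne', c, hc⟩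

lemma Aset_eq_empty_of_forall_label_ne {i : Fin r} (hi : 0 < (i : ℕ))
    (h : ∀ k, A.IsChild k i → A.label k ≠ A.label i) : A.Aset i = ∅ := by
  refine eq_empty_of_forall_notMem fun k hk => ?_
  obtain ⟨hk, hnot⟩ := (mem_filter.1 hk).2
  exact hnot ⟨_, A.prox_parent hi, A.prox_parent_of_isChild hk hi (h k hk)⟩

end ToricCluster

namespace ToricConstellation

variable {r : ℕ} (C : ToricConstellation r)

/-- The configuration around `Q_i` in the paper's notation, with the labels `1,2,3` shifted
to `0,1,2`: `P = Q_i(1)` is the only child of `i`, `Q 1 = Q_i(1,2)`,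
`Q (s + 1) = Q_i(1,2,3^s)`, and these are exactly the nodes proximate to `i`. -/
structure ProxChain (i P : Fin r) (Q : ℕ → Fin r) (n : ℕ) : Prop where
  two_le : 2 ≤ n
  isChild_iff : ∀ k, C.IsChild k i ↔ k = P
  label_P : C.label P = 0
  isChild_Q_one : C.IsChild (Q 1) P
  label_Q_one : C.label (Q 1) = 1
  isChild_Q_succ : ∀ s, 1 ≤ s → s ≤ n - 2 → C.IsChild (Q (s + 1)) (Q s)
  label_Q_succ : ∀ s, 1 ≤ s → s ≤ n - 2 → C.label (Q (s + 1)) = 2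
  prox_eq : univ.filter (fun k => C.Prox k i) = insert P ((Icc 1 (n - 1)).image Q)

namespace ProxChain

variable {C} {i P : Fin r} {Q : ℕ → Fin r} {n : ℕ}

lemma one_le_pred (hc : C.ProxChain i P Q n) : 1 ≤ n - 1 := by
  have := hc.two_le
  omega

lemma isChild_P (hc : C.ProxChain i P Q n) : C.IsChild P i := (hc.isChild_iff P).2 rfl

lemma Q_lt_Q (hc : C.ProxChain i P Q n) {s t : ℕ} (hs : 1 ≤ s) (hst : s < t) (ht : t ≤ n - 1) :
    Q s < Q t := by
  induction t, hst using Nat.le_induction with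
  | base => exact C.lt_of_isChild (hc.isChild_Q_succ s hs (by omega))
  | succ t hst ih =>
    exact (ih (by omega)).trans (C.lt_of_isChild (hc.isChild_Q_succ t (by omega) (by omega)))

lemma strictMonoOn_Q (hc : C.ProxChain i P Q n) : StrictMonoOn Q (Set.Icc 1 (n - 1)) :=
  fun _ hs _ ht hst => hc.Q_lt_Q hs.1 hst ht.2

lemma P_lt_Q (hc : C.ProxChain i P Q n) {s : ℕ} (hs : 1 ≤ s) (hsn : s ≤ n - 1) : P < Q s := by
  have hP := C.lt_of_isChild hc.isChild_Q_one
  rcases hs.eq_or_lt with rfl | hs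
  · exact hP
  · exact hP.trans (hc.Q_lt_Q le_rfl hs hsn)

lemma sum_prox (hc : C.ProxChain i P Q n) (f : Fin r → ℤ) :
    ∑ k ∈ univ.filter (fun k => C.Prox k i), f k = f P + ∑ s ∈ Icc 1 (n - 1), f (Q s) := by
  have hP : P ∉ (Icc 1 (n - 1)).image Q := by
    simp only [mem_image, mem_Icc, not_exists, not_and]
    exact fun s hs hQ => (hc.P_lt_Q hs.1 hs.2).ne' hQ
  rw [hc.prox_eq, sum_insert hP, sum_image (by simpa using hc.strictMonoOn_Q.injOn)]

lemma not_inChain_Q (hc : C.ProxChain i P Q n) {t : ℕ} {a b : Fin 3} (ht : 2 ≤ t)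
    (htn : t ≤ n - 1) :
    C.inChain i a b (Q t) = false := by
  have hiP := C.lt_of_isChild hc.isChild_P
  induction t, ht using Nat.le_induction with
  | base =>
    rw [Bool.eq_false_iff]
    intro h
    have h2 : C.IsChild (Q 2) (Q 1) := hc.isChild_Q_succ 1 le_rfl (by omega)
    have hl2 : C.label (Q 2) = 2 := hc.label_Q_succ 1 le_rfl (by omega)
    obtain ⟨hb2, h1⟩ := C.inChain_parent_of_parent_ne h
      (h2.2 ▸ (hiP.trans (hc.P_lt_Q le_rfl (by omega))).ne')
    obtain ⟨hb1, -⟩ := C.inChain_parent_of_parent_ne (h2.2 ▸ h1)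
      (hc.isChild_Q_one.2 ▸ hiP.ne')
    rw [hl2] at hb2
    rw [hc.label_Q_one] at hb1
    exact absurd (hb2.trans hb1.symm) (by decide)
  | succ t ht ih =>
    rw [Bool.eq_false_iff]
    intro h
    have hQ := hc.isChild_Q_succ t (by omega) (by omega)
    obtain ⟨-, h'⟩ := C.inChain_parent_of_parent_ne h
      (hQ.2 ▸ (hiP.trans (hc.P_lt_Q (by omega) (by omega))).ne')
    simp [hQ.2, ih (by omega)] at h'

lemma linProx_iff (hc : C.ProxChain i P Q n) {k : Fin r} : C.LinProx k i ↔ k = P ∨ k = Q 1 := by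
  constructor
  · intro h
    have : k ∈ univ.filter (fun k => C.Prox k i) :=
      mem_filter.2 ⟨mem_univ k, C.prox_of_linProx h⟩
    rw [hc.prox_eq, mem_insert, mem_image] at this
    obtain rfl | ⟨s, hs, rfl⟩ := this
    · exact Or.inl rfl
    · obtain ⟨a, b, -, hab⟩ := h
      rw [mem_Icc] at hs
      rcases hs.1.eq_or_lt with rfl | hs1
      · exact Or.inr rfl
      · simp [hc.not_inChain_Q hs1 hs.2] at hab
  · rintro (rfl | rfl)
    · exact ⟨0, 1, by decide, C.inChain_of_isChild hc.isChild_P hc.label_P⟩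
    · refine ⟨0, 1, by decide, C.inChain_of_parent hc.isChild_Q_one.1 hc.label_Q_one ?_⟩
      rw [hc.isChild_Q_one.2]
      exact C.inChain_of_isChild hc.isChild_P hc.label_P

lemma inChain_P_Q (hc : C.ProxChain i P Q n) {s : ℕ} (hs : 1 ≤ s) (hsn : s ≤ n - 1) :
    C.inChain P 1 2 (Q s) = true := by
  induction s, hs using Nat.le_induction with
  | base => exact C.inChain_of_isChild hc.isChild_Q_one hc.label_Q_one
  | succ s hs ih =>
    have hQ := hc.isChild_Q_succ s hs (by omega)
    refine C.inChain_of_parent hQ.1 (hc.label_Q_succ s hs (by omega)) ?_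
    rw [hQ.2]
    exact ih (by omega)

lemma filter_linProx_P (hc : C.ProxChain i P Q n) :
    (univ.filter (fun k => C.Prox k i)).filter (fun k => C.LinProx k P)
      = (Icc 1 (n - 1)).image Q := by
  rw [hc.prox_eq, filter_insert, if_neg (fun ⟨_, _, _, h⟩ => lt_irrefl P (C.lt_of_inChain h)),
    filter_true_of_mem]
  simp only [mem_image, mem_Icc]
  rintro _ ⟨s, hs, rfl⟩
  exact ⟨1, 2, by decide, hc.inChain_P_Q hs.1 hs.2⟩

lemma not_inChain_Q_Q (hc : C.ProxChain i P Q n) {s t : ℕ} {a b : Fin 3} (hab : a ≠ b)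
    (hs : 1 ≤ s) (hst : s + 2 ≤ t) (htn : t ≤ n - 1) :
    C.inChain (Q s) a b (Q t) = false := by
  induction t, hst using Nat.le_induction with
  | base =>
    rw [Bool.eq_false_iff]
    intro h
    have h1 := hc.isChild_Q_succ s hs (by omega)
    have h2 := hc.isChild_Q_succ (s + 1) (by omega) (by omega)
    obtain ⟨hb, h'⟩ := C.inChain_parent_of_parent_ne h
      (h2.2 ▸ (C.lt_of_isChild h1).ne')
    rw [h2.2] at h'
    have ha := C.label_eq_of_inChain_of_isChild h' h1
    rw [hc.label_Q_succ s hs (by omega)] at ha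
    rw [hc.label_Q_succ (s + 1) (by omega) (by omega)] at hb
    exact hab (ha.symm.trans hb)
  | succ t ht ih =>
    rw [Bool.eq_false_iff]
    intro h
    have hQ := hc.isChild_Q_succ t (by omega) (by omega)
    obtain ⟨-, h'⟩ := C.inChain_parent_of_parent_ne h
      (hQ.2 ▸ (hc.Q_lt_Q hs (by omega) (by omega)).ne')
    simp [hQ.2, ih (by omega)] at h'

lemma filter_linProx_Q (hc : C.ProxChain i P Q n) {s : ℕ} (hs : 1 ≤ s) (hsn : s ≤ n - 1) :
    (univ.filter (fun k => C.Prox k i)).filter (fun k => C.LinProx k (Q s))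
      = if s + 1 ≤ n - 1 then {Q (s + 1)} else ∅ := by
  ext k
  simp only [hc.prox_eq, mem_filter, mem_insert, mem_image, mem_Icc]
  constructor
  · rintro ⟨hk | ⟨t, ht, rfl⟩, a, b, hab, hchain⟩
    · subst hk
      exact absurd (C.lt_of_inChain hchain) (hc.P_lt_Q hs hsn).not_gt
    · have hst : s < t :=
        (hc.strictMonoOn_Q.lt_iff_lt ⟨hs, hsn⟩ ht).1 (C.lt_of_inChain hchain)
      have ht1 : t = s + 1 := by
        by_contra hne
        simp [hc.not_inChain_Q_Q hab hs (by omega) ht.2] at hchain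
      subst ht1
      simp [ht.2]
  · split_ifs with h
    · rw [mem_singleton]
      rintro rfl
      have hsn' : s ≤ n - 2 := by omega
      exact ⟨Or.inr ⟨s + 1, ⟨by omega, h⟩, rfl⟩, 2, 0, by decide,
        C.inChain_of_isChild (hc.isChild_Q_succ s hs hsn') (hc.label_Q_succ s hs hsn')⟩
    · simp

lemma P_ne_Q_one (hc : C.ProxChain i P Q n) : P ≠ Q 1 := (C.lt_of_isChild hc.isChild_Q_one).ne

lemma cone_P (hc : C.ProxChain i P Q n) : C.cone P = Function.update (C.cone i) 0 (C.v i) := by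
  rw [cone_of_pos C hc.isChild_P.1, hc.isChild_P.2, hc.label_P]

lemma cone_Q_one (hc : C.ProxChain i P Q n) :
    C.cone (Q 1) = Function.update (C.cone P) 1 (C.v P) := by
  rw [cone_of_pos C hc.isChild_Q_one.1, hc.isChild_Q_one.2, hc.label_Q_one]

lemma filter_linProx_i (hc : C.ProxChain i P Q n) (j : Fin r) :
    (univ.filter (fun k => C.Prox k j)).filter (fun k => C.LinProx k i)
      = ({P, Q 1} : Finset (Fin r)).filter (fun k => C.Prox k j) := by
  ext k
  simp only [mem_filter, mem_univ, true_and, mem_insert, mem_singleton, hc.linProx_iff]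
  tauto

lemma prox_P_of_cone_eq (hc : C.ProxChain i P Q n) {j : Fin r} {c : Fin 3} (hc0 : c ≠ 0)
    (hj : j < i) (h : C.cone i c = C.v j) : C.Prox P j :=
  ⟨(hj.trans (C.lt_of_isChild hc.isChild_P)).ne', c,
    by rw [hc.cone_P, Function.update_of_ne hc0, h]⟩

lemma filter_prox_of_cone_two_eq (hc : C.ProxChain i P Q n) {j : Fin r} (hj : j < i)
    (h : C.cone i 2 = C.v j) :
    ({P, Q 1} : Finset (Fin r)).filter (fun k => C.Prox k j) = {P, Q 1} := by
  have hjQ : j < Q 1 :=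
    (hj.trans (C.lt_of_isChild hc.isChild_P)).trans (hc.P_lt_Q le_rfl hc.one_le_pred)
  refine filter_true_of_mem fun k hk => ?_
  rcases mem_insert.1 hk with rfl | hk
  · exact hc.prox_P_of_cone_eq (by decide) hj h
  · rw [mem_singleton.1 hk]
    refine ⟨hjQ.ne', 2, ?_⟩
    rw [hc.cone_Q_one, Function.update_of_ne (by decide), hc.cone_P,
      Function.update_of_ne (by decide), h]

lemma filter_prox_of_cone_one_eq (hc : C.ProxChain i P Q n) {j : Fin r} (hj : j < i)
    (h : C.cone i 1 = C.v j) :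
    ({P, Q 1} : Finset (Fin r)).filter (fun k => C.Prox k j) = {P} := by
  have hiP := C.lt_of_isChild hc.isChild_P
  have hQ : ¬ C.Prox (Q 1) j := by
    rintro ⟨-, c, hcj⟩
    rw [hc.cone_Q_one] at hcj
    obtain rfl | rfl | rfl : c = 0 ∨ c = 1 ∨ c = 2 := by omega
    · rw [Function.update_of_ne (by decide), hc.cone_P, Function.update_self] at hcj
      exact hj.ne' (C.v_injective hcj)
    · rw [Function.update_self] at hcj
      exact (hj.trans hiP).ne' (C.v_injective hcj)
    · rw [Function.update_of_ne (by decide), hc.cone_P, Function.update_of_ne (by decide)] at hcj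
      exact (C.linearIndependent_cone i).injective (hcj.trans h.symm) |> absurd <| by decide
  rw [filter_insert, if_pos (hc.prox_P_of_cone_eq (by decide) hj h), filter_singleton, if_neg hQ]
  rfl

end ProxChain

end ToricConstellation

namespace ToricConstellation.ProxChain

variable {r : ℕ} {A : ToricCluster r} {i P : Fin r} {Q : ℕ → Fin r} {n : ℕ}

lemma sum_mul_sub_one (hc : A.ProxChain i P Q n) (hmP : A.m P = n - 1)
    (hmQ : ∀ s, 1 ≤ s → s ≤ n - 1 → A.m (Q s) = 1) :
    ∑ j ∈ A.proxSet i, A.m j * (A.m j - 1) = ((n : ℤ) - 1) * (n - 2) := by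
  rw [proxSet, hc.sum_prox, hmP,
    sum_congr rfl fun s hs => by rw [hmQ s (mem_Icc.1 hs).1 (mem_Icc.1 hs).2]]
  simp only [sub_self, mul_zero, sum_const_zero, add_zero]
  ring

lemma sum_sub_sum_linProx (hc : A.ProxChain i P Q n) (hmP : A.m P = n - 1)
    (hmQ : ∀ s, 1 ≤ s → s ≤ n - 1 → A.m (Q s) = 1) :
    ∑ j ∈ A.proxSet i,
      (A.m j - ∑ k ∈ (A.proxSet i).filter (fun k => A.LinProx k j), A.m k) = 1 := by
  have hmQ' : ∀ s ∈ Icc 1 (n - 1), A.m (Q s) = 1 :=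
    fun s hs => hmQ s (mem_Icc.1 hs).1 (mem_Icc.1 hs).2
  have hQ (s) (hs : s ∈ Icc 1 (n - 1)) :
      A.m (Q s) - ∑ k ∈ (A.proxSet i).filter (fun k => A.LinProx k (Q s)), A.m k
        = if s = n - 1 then 1 else 0 := by
    obtain ⟨hs1, hsn⟩ := mem_Icc.1 hs
    rw [proxSet, hc.filter_linProx_Q hs1 hsn, hmQ s hs1 hsn]
    by_cases hsucc : s + 1 ≤ n - 1
    · simp only [hsucc, ↓reduceIte, sum_singleton, hmQ (s + 1) (by omega) hsucc, sub_self]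
      omega
    · simp only [hsucc, ↓reduceIte, sum_empty, sub_zero]
      omega
  refine (hc.sum_prox _).trans ?_
  rw [sum_congr rfl hQ, sum_ite_eq', if_pos (mem_Icc.2 ⟨hc.one_le_pred, le_rfl⟩), proxSet,
    hc.filter_linProx_P, sum_image (by simpa using hc.strictMonoOn_Q.injOn), sum_congr rfl hmQ',
    hmP]
  simp only [sum_const, Nat.card_Icc, add_tsub_cancel_right, Int.nsmul_eq_mul, mul_one]
  have := hc.two_le
  omega

lemma chi_eq (hc : A.ProxChain i P Q n) (hmi : A.m i = n) (hmP : A.m P = n - 1)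
    (hmQ : ∀ s, 1 ≤ s → s ≤ n - 1 → A.m (Q s) = 1) (hA : A.Aset i = ∅) :
    A.chi i = 2 + ∑ j ∈ A.Bset i,
        (A.m i - ∑ k ∈ ({P, Q 1} : Finset (Fin r)).filter (fun k => A.Prox k j), A.m k)
      - 2 * #(A.Bset i) + ((#(A.Bset i)).choose 2 : ℕ) := by
  simp only [chi, proxSet, ← hc.filter_linProx_i]
  rw [← proxSet, hc.sum_mul_sub_one hmP hmQ, hc.sum_sub_sum_linProx hmP hmQ, hA, card_empty, hmi]
  ring

lemma Aset_eq_empty (hc : A.ProxChain i P Q n) (hi : 0 < (i : ℕ)) (hl : A.label i ≠ 0) :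
    A.Aset i = ∅ :=
  A.Aset_eq_empty_of_forall_label_ne hi fun k hk => by
    rw [(hc.isChild_iff k).1 hk, hc.label_P]
    exact hl.symm

lemma chi_eq_zero_of_labelsUnder_eq_singleton (hc : A.ProxChain i P Q n) (hmi : A.m i = n)
    (hmP : A.m P = n - 1) (hmQ : ∀ s, 1 ≤ s → s ≤ n - 1 → A.m (Q s) = 1)
    (hS : A.labelsUnder i = {2}) : A.chi i = 0 := by
  have hi := A.pos_of_labelsUnder_nonempty (hS ▸ singleton_nonempty 2)
  have hl : A.label i = 2 := mem_singleton.1 (hS ▸ A.label_mem_labelsUnder hi)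
  have hcone : A.cone i 2 = A.v (A.parent i) := by rw [A.cone_of_pos hi, hl, Function.update_self]
  have hB : A.Bset i = {A.parent i} := by
    ext j
    simp only [A.mem_Bset_iff, hS, mem_singleton, exists_eq_left, hcone]
    exact ⟨fun h => (A.v_injective h).symm, fun h => h ▸ rfl⟩
  rw [hc.chi_eq hmi hmP hmQ (hc.Aset_eq_empty hi (by rw [hl]; decide)), hB, sum_singleton,
    hc.filter_prox_of_cone_two_eq (A.parent_lt_self hi) hcone, sum_pair hc.P_ne_Q_one, hmP,
    hmQ 1 le_rfl hc.one_le_pred, hmi]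
  simp

lemma chi_eq_zero_of_labelsUnder_eq_pair (hc : A.ProxChain i P Q n) (hmi : A.m i = n)
    (hmP : A.m P = n - 1) (hmQ : ∀ s, 1 ≤ s → s ≤ n - 1 → A.m (Q s) = 1)
    (hS : A.labelsUnder i = {1, 2}) : A.chi i = 0 := by
  have hi := A.pos_of_labelsUnder_nonempty (hS ▸ insert_nonempty 1 {2})
  have hl : A.label i ≠ 0 := by
    have := A.label_mem_labelsUnder hi
    rw [hS, mem_insert, mem_singleton] at this
    rcases this with h | h <;> rw [h] <;> decide
  obtain ⟨a₁, ha₁, h₁⟩ := A.exists_cone_eq_v_of_mem_labelsUnder (i := i) (c := 1) (by simp [hS])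
  obtain ⟨a₂, ha₂, h₂⟩ := A.exists_cone_eq_v_of_mem_labelsUnder (i := i) (c := 2) (by simp [hS])
  have ha : a₁ ≠ a₂ := by
    rintro rfl
    exact absurd ((A.linearIndependent_cone i).injective (h₁.trans h₂.symm)) (by decide)
  have hB : A.Bset i = {a₁, a₂} := by
    ext j
    simp only [A.mem_Bset_iff, hS, mem_insert, mem_singleton, exists_eq_or_imp, exists_eq_left,
      h₁, h₂, A.v_injective.eq_iff]
    tauto
  rw [hc.chi_eq hmi hmP hmQ (hc.Aset_eq_empty hi hl), hB, sum_pair ha,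
    hc.filter_prox_of_cone_one_eq ha₁ h₁, hc.filter_prox_of_cone_two_eq ha₂ h₂, sum_singleton,
    sum_pair hc.P_ne_Q_one, hmP, hmQ 1 le_rfl hc.one_le_pred, hmi, card_pair ha]
  simp

end ToricConstellation.ProxChain

theorem stmt8_general {r : ℕ} (A : ToricCluster r)
    (i P : Fin r) (mm : ℕ) (hmm : 2 ≤ mm) (hmi : A.m i = (mm : ℤ))
    (hchild : Finset.univ.filter
        (fun j => IsChild A.toToricConstellation j i) = {P})
    (hPlab : A.toToricConstellation.label P = 0)
    (hmP : A.m P = (mm : ℤ) - 1)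
    (Q : ℕ → Fin r)
    (hQ1 : IsChild A.toToricConstellation (Q 1) P
        ∧ A.toToricConstellation.label (Q 1) = 1)
    (hQs : ∀ s, 1 ≤ s → s ≤ mm - 2 →
        IsChild A.toToricConstellation (Q (s + 1)) (Q s)
        ∧ A.toToricConstellation.label (Q (s + 1)) = 2)
    (hWQ : ∀ s, 1 ≤ s → s ≤ mm - 1 → A.m (Q s) = 1)
    (hprox : A.proxSet i = insert P ((Finset.Icc 1 (mm - 1)).image Q))
    (hS : labelsUnder A.toToricConstellation i = {2}
        ∨ labelsUnder A.toToricConstellation i = {1, 2}) :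
    A.chi i = 0 := by
  have hc : A.ProxChain i P Q mm :=
    { two_le := hmm
      isChild_iff := fun k => by simpa using Finset.ext_iff.1 hchild k
      label_P := hPlab
      isChild_Q_one := hQ1.1
      label_Q_one := hQ1.2
      isChild_Q_succ := fun s hs hsm => (hQs s hs hsm).1
      label_Q_succ := fun s hs hsm => (hQs s hs hsm).2
      prox_eq := hprox }
  rcases hS with hS | hS
  · exact hc.chi_eq_zero_of_labelsUnder_eq_singleton hmi hmP hWQ hS
  · exact hc.chi_eq_zero_of_labelsUnder_eq_pair hmi hmP hWQ hS

theorem stmt8 {r : ℕ} (A : ToricCluster r) (hA : A.Idealistic)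
    (i P : Fin r) (mm : ℕ) (hmm : 2 ≤ mm) (hmi : A.m i = (mm : ℤ))
    (hchild : Finset.univ.filter
        (fun j => IsChild A.toToricConstellation j i) = {P})
    (hPlab : A.toToricConstellation.label P = 0)
    (hmP : A.m P = (mm : ℤ) - 1)
    (Q : ℕ → Fin r)
    (hQ1 : IsChild A.toToricConstellation (Q 1) P
        ∧ A.toToricConstellation.label (Q 1) = 1)
    (hQs : ∀ s, 1 ≤ s → s ≤ mm - 2 →
        IsChild A.toToricConstellation (Q (s + 1)) (Q s)
        ∧ A.toToricConstellation.label (Q (s + 1)) = 2)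
    (hWQ : ∀ s, 1 ≤ s → s ≤ mm - 1 → A.m (Q s) = 1)
    (hprox : A.proxSet i = insert P ((Finset.Icc 1 (mm - 1)).image Q))
    (hS : labelsUnder A.toToricConstellation i = {2}
        ∨ labelsUnder A.toToricConstellation i = {1, 2}) :
    A.chi i = 0 :=
  stmt8_general A i P mm hmm hmi hchild hPlab hmP Q hQ1 hQs hWQ hprox hS
end

section
/- For all integers i ≥ 2 and l ≥ 0 and all positive integers m, m_1, …, m_{i−1} with m_s ≥ 2m − 1 for every 1 ≤ s ≤ i−1, one has (2i+1)·((4+3l)·Σ_{s=1}^{i−1} m_s + (3+3l)·m) ≠ (i(8+6l)+2l+1)·(Σ_{s=1}^{i−1} m_s + m). -/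
/-!
Two candidate poles `-ν₁/N₁` and `-ν₂/N₂` coincide iff `ν₁ N₂ = ν₂ N₁`. For the two given
components, with `S = m₁ + ⋯ + m_{i-1}`, this equation collapses to `(l + 3) S = (2(i - 1) - l) m`.
The proximity inequalities give `mₛ ≥ 2m - 1 ≥ m`, hence `S ≥ (i - 1) m`, and then the left side is
at least `3 (i - 1) m`, strictly more than the right side.
-/

open Finset

lemma candidatePole_eq_iff {R : Type*} [CommRing R] (i l m S : R) :
    (2 * i + 1) * ((4 + 3 * l) * S + (3 + 3 * l) * m) = (i * (8 + 6 * l) + 2 * l + 1) * (S + m) ↔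
      (l + 3) * S = (2 * (i - 1) - l) * m := by
  constructor <;> intro h <;> linear_combination h

lemma two_mul_sub_mul_lt_add_three_mul {R : Type*} [CommRing R] [LinearOrder R]
    [IsStrictOrderedRing R] {k l m S : R} (hk : 0 < k) (hl : 0 ≤ l) (hm : 0 < m) (hS : k * m ≤ S) :
    (2 * k - l) * m < (l + 3) * S := by
  have hkm : 0 < k * m := mul_pos hk hm
  calc (2 * k - l) * m ≤ 2 * (k * m) := by nlinarith [mul_nonneg hl hm.le]
    _ < 3 * (k * m) := by linarith
    _ ≤ 3 * S := by linarith
    _ ≤ (l + 3) * S := by nlinarith [mul_nonneg hl (hkm.le.trans hS)]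

lemma card_mul_le_sum_Icc {f : ℕ → ℤ} {n : ℕ} {b : ℤ} (hf : ∀ s, 1 ≤ s → s ≤ n → b ≤ f s) :
    (n : ℤ) * b ≤ ∑ s ∈ Icc 1 n, f s := by
  have := card_nsmul_le_sum (Icc 1 n) f b fun s hs => hf s (mem_Icc.mp hs).1 (mem_Icc.mp hs).2
  simpa using this

theorem stmt18 (i l : ℕ) (hi : 2 ≤ i) (m : ℤ) (hm : 0 < m)
    (ms : ℕ → ℤ) (hms : ∀ s, 1 ≤ s → s ≤ i - 1 → 0 < ms s ∧ 2 * m - 1 ≤ ms s) :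
    (2 * (i : ℤ) + 1) * ((4 + 3 * (l : ℤ)) * (∑ s ∈ Finset.Icc 1 (i - 1), ms s)
        + (3 + 3 * (l : ℤ)) * m)
      ≠ ((i : ℤ) * (8 + 6 * (l : ℤ)) + 2 * (l : ℤ) + 1)
        * ((∑ s ∈ Finset.Icc 1 (i - 1), ms s) + m) := by
  rw [Ne, candidatePole_eq_iff]
  have hS : ((i - 1 : ℕ) : ℤ) * m ≤ ∑ s ∈ Icc 1 (i - 1), ms s :=
    card_mul_le_sum_Icc fun s hs₁ hs₂ => by linarith [(hms s hs₁ hs₂).2]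
  have hk : ((i - 1 : ℕ) : ℤ) = (i : ℤ) - 1 := by push_cast [show 1 ≤ i by omega]; ring
  rw [hk] at hS
  exact (two_mul_sub_mul_lt_add_three_mul (by omega) (Nat.cast_nonneg l) hm hS).ne'
end
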